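/- arXiv:1012.2104 — 3 statements merged into one kernel-verified Lean document; each statement's English description precedes it below -/
import Mathlib

section
/- Let V be a finite-dimensional real normed vector space, let J : ℝ → L(V,V) be a differentiable family with J(t) ∘ J(t) = -id for all t, and set K(t) := J'(t). Let g : ℝ → (symmetric bilinear forms on V) be a differentiable family whose derivative decomposes as g'(t) = H(t) + F(t), where H(t) is a symmetric bilinear form that is J(t)-invariant and F(t) is a symmetric bilinear form that is J(t)-anti-invariant. Assume g(0) is compatible with J(0), i.e. g(0)(J(0)u, J(0)v) = g(0)(u,v) for all u,v. Then g(t) is compatible with J(t) for all t if and only if for all t and all u, v ∈ V one has F(t)(u,v) = (1/2)·( g(t)(K(t)u, J(t)v) + g(t)(J(t)u, K(t)v) ). -/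
/-!
Differentiating `g(t)(J(t)u, J(t)v) - g(t)(u, v)` and using that `H(t)` is `J(t)`-invariant while
`F(t)` is `J(t)`-anti-invariant, the `H`-terms cancel and the derivative is
`g(t)(K(t)u, J(t)v) + g(t)(J(t)u, K(t)v) - 2 F(t)(u, v)`. Since this defect vanishes at `t = 0`,
it vanishes identically exactly when its derivative does.
-/

theorem HasDerivAt.clm_apply₂ {𝕜 E F G : Type*} [NontriviallyNormedField 𝕜]
    [NormedAddCommGroup E] [NormedSpace 𝕜 E] [NormedAddCommGroup F] [NormedSpace 𝕜 F]
    [NormedAddCommGroup G] [NormedSpace 𝕜 G] {b : 𝕜 → E →L[𝕜] F →L[𝕜] G} {b' : E →L[𝕜] F →L[𝕜] G}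
    {u : 𝕜 → E} {u' : E} {v : 𝕜 → F} {v' : F} {x : 𝕜}
    (hb : HasDerivAt b b' x) (hu : HasDerivAt u u' x) (hv : HasDerivAt v v' x) :
    HasDerivAt (fun y => b y (u y) (v y)) (b' (u x) (v x) + b x u' (v x) + b x (u x) v') x := by
  simpa using (hb.clm_apply hu).clm_apply hv

theorem forall_eq_zero_iff_of_hasDerivAt {𝕜 G : Type*} [RCLike 𝕜] [NormedAddCommGroup G]
    [NormedSpace 𝕜 G] {f f' : 𝕜 → G} (hf : ∀ x, HasDerivAt f (f' x) x) {x₀ : 𝕜}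
    (h₀ : f x₀ = 0) : (∀ x, f x = 0) ↔ ∀ x, f' x = 0 := by
  constructor
  · intro h x
    exact (hf x).unique (by simpa [funext h] using hasDerivAt_const x (0 : G))
  · intro h x
    rw [is_const_of_deriv_eq_zero (fun y => (hf y).differentiableAt)
      (fun y => (hf y).deriv.trans (h y)) x x₀, h₀]

theorem hasDerivAt_compatibility_defect {V : Type*} [NormedAddCommGroup V] [NormedSpace ℝ V]
    {J : ℝ → V →L[ℝ] V} {J' : V →L[ℝ] V} {g : ℝ → V →L[ℝ] V →L[ℝ] ℝ}
    {H F : V →L[ℝ] V →L[ℝ] ℝ} {t : ℝ} (hJ : HasDerivAt J J' t) (hg : HasDerivAt g (H + F) t)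
    (hH : ∀ u v, H (J t u) (J t v) = H u v) (hF : ∀ u v, F (J t u) (J t v) = -F u v) (u v : V) :
    HasDerivAt (fun s => g s (J s u) (J s v) - g s u v)
      (g t (J' u) (J t v) + g t (J t u) (J' v) - 2 * F u v) t := by
  have hJu : HasDerivAt (fun s => J s u) (J' u) t := by
    simpa using hJ.clm_apply (hasDerivAt_const t u)
  have hJv : HasDerivAt (fun s => J s v) (J' v) t := by
    simpa using hJ.clm_apply (hasDerivAt_const t v)
  refine ((hg.clm_apply₂ hJu hJv).sub
    (hg.clm_apply₂ (hasDerivAt_const t u) (hasDerivAt_const t v))).congr_deriv ?_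
  simp only [add_apply, hH, hF, map_zero, zero_apply, add_zero]
  ring

theorem statement1_general {V : Type*} [NormedAddCommGroup V] [NormedSpace ℝ V]
    (J : ℝ → V →L[ℝ] V) (hJdiff : Differentiable ℝ J)
    (g H F : ℝ → V →L[ℝ] V →L[ℝ] ℝ)
    (hgdiff : Differentiable ℝ g)
    (hHinv : ∀ (t : ℝ) (u v : V), H t (J t u) (J t v) = H t u v)
    (hFanti : ∀ (t : ℝ) (u v : V), F t (J t u) (J t v) = -(F t u v))
    (hderiv : ∀ t : ℝ, deriv g t = H t + F t)
    (hcompat0 : ∀ u v : V, g 0 (J 0 u) (J 0 v) = g 0 u v) :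
    (∀ (t : ℝ) (u v : V), g t (J t u) (J t v) = g t u v) ↔
      (∀ (t : ℝ) (u v : V), F t u v =
        (1/2) * (g t (deriv J t u) (J t v) + g t (J t u) (deriv J t v))) := by
  -- `hgdiff` and `hderiv` carry the non-normed instances on `V →L[ℝ] V →L[ℝ] ℝ`,
  -- so unification needs the explicit arguments.
  have hg (t : ℝ) : HasDerivAt g (H t + F t) t :=
    hderiv t ▸ DifferentiableAt.hasDerivAt (𝕜 := ℝ) (F := V →L[ℝ] V →L[ℝ] ℝ) (hgdiff t)
  have defect_zero_iff (u v : V) := forall_eq_zero_iff_of_hasDerivAt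
    (fun t => hasDerivAt_compatibility_defect (hJdiff t).hasDerivAt
      (hg t) (hHinv t) (hFanti t) u v)
    (sub_eq_zero.2 (hcompat0 u v))
  constructor
  · intro hcompat t u v
    have := (defect_zero_iff u v).1 (fun s => sub_eq_zero.2 (hcompat s u v)) t
    linarith
  · intro hF t u v
    exact sub_eq_zero.1 ((defect_zero_iff u v).2 (fun s => by rw [hF s u v]; ring) t)

/-- Lemma 4.2, first part: compatibility of a varying metric with a
varying almost complex structure is preserved iff the anti-invariant part of the
variation of the metric is determined by the variation of `J`. -/
theorem statement1 {V : Type*} [NormedAddCommGroup V] [NormedSpace ℝ V]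
    [FiniteDimensional ℝ V]
    (J : ℝ → V →L[ℝ] V) (hJdiff : Differentiable ℝ J)
    (hJsq : ∀ t : ℝ, (J t).comp (J t) = -(ContinuousLinearMap.id ℝ V))
    (g H F : ℝ → V →L[ℝ] V →L[ℝ] ℝ)
    (hgdiff : Differentiable ℝ g)
    (hgsym : ∀ (t : ℝ) (u v : V), g t u v = g t v u)
    (hHsym : ∀ (t : ℝ) (u v : V), H t u v = H t v u)
    (hFsym : ∀ (t : ℝ) (u v : V), F t u v = F t v u)
    (hHinv : ∀ (t : ℝ) (u v : V), H t (J t u) (J t v) = H t u v)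
    (hFanti : ∀ (t : ℝ) (u v : V), F t (J t u) (J t v) = -(F t u v))
    (hderiv : ∀ t : ℝ, deriv g t = H t + F t)
    (hcompat0 : ∀ u v : V, g 0 (J 0 u) (J 0 v) = g 0 u v) :
    (∀ (t : ℝ) (u v : V), g t (J t u) (J t v) = g t u v) ↔
      (∀ (t : ℝ) (u v : V), F t u v =
        (1/2) * (g t (deriv J t u) (J t v) + g t (J t u) (deriv J t v))) :=
  statement1_general J hJdiff g H F hgdiff hHinv hFanti hderiv hcompat0
end

section
/- Let V be a finite-dimensional real normed vector space, let J : ℝ → L(V,V) be a differentiable family with J(t) ∘ J(t) = -id for all t, K(t) := J'(t), and let g : ℝ → (symmetric bilinear forms on V) be a differentiable family with g'(t) = H(t) + F(t), where H(t) is symmetric and J(t)-invariant, F(t) is symmetric and J(t)-anti-invariant, and suppose g(t) is compatible with J(t) for every t. Define the associated Kähler forms ω(t)(u,v) := g(t)(J(t)u, v). Then for all t and all u,v ∈ V, ω'(t)(u,v) = H(t)(J(t)u, v) + (1/2)·( g(t)(K(t)u, v) - g(t)(u, K(t)v) ). -/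
/-!
Differentiating `ω t (u, v) = g t (J t u, v)` gives `g' (J u, v) + g (K u, v)` with `g' = H + F`, so
everything reduces to expressing the anti-invariant part `F (J u, v)` through `K`. Differentiating
`J² = -1` gives `K J = -J K`, and differentiating the compatibility `g (J a, J b) = g (a, b)` at
`a = u`, `b = -J v` yields `2 F (J u, v) = -(g (K u, v) + g (u, K v))`, because there `H` and `F`
contribute `H (J u, v) ± F (J u, v)` on the two sides.
-/

open ContinuousLinearMap

section Calculus

variable {𝕜 E F G : Type*} [NontriviallyNormedField 𝕜]
  [NormedAddCommGroup E] [NormedSpace 𝕜 E] [NormedAddCommGroup F] [NormedSpace 𝕜 F]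
  [NormedAddCommGroup G] [NormedSpace 𝕜 G] {t : 𝕜}

theorem HasDerivAt.clm_apply_const {c : 𝕜 → E →L[𝕜] F} {c' : E →L[𝕜] F}
    (hc : HasDerivAt c c' t) (u : E) : HasDerivAt (fun s => c s u) (c' u) t := by
  simpa using hc.clm_apply (hasDerivAt_const t u)

theorem HasDerivAt.clm_apply₂_s3 {B : 𝕜 → E →L[𝕜] F →L[𝕜] G} {B' : E →L[𝕜] F →L[𝕜] G}
    {a : 𝕜 → E} {a' : E} {b : 𝕜 → F} {b' : F}
    (hB : HasDerivAt B B' t) (ha : HasDerivAt a a' t) (hb : HasDerivAt b b' t) :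
    HasDerivAt (fun s => B s (a s) (b s)) (B' (a t) (b t) + B t a' (b t) + B t (a t) b') t := by
  simpa only [add_apply] using (hB.clm_apply ha).clm_apply hb

theorem HasDerivAt.anticomm_of_comp_self_const {J : 𝕜 → E →L[𝕜] E} {K A : E →L[𝕜] E}
    (hJ : HasDerivAt J K t) (hJsq : ∀ s, (J s).comp (J s) = A) (w : E) :
    K (J t w) = -J t (K w) := by
  have hconst : HasDerivAt (fun s => (J s).comp (J s)) 0 t := by
    simpa only [hJsq] using hasDerivAt_const t A
  have h := congrArg (· w) ((hJ.clm_comp hJ).unique hconst)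
  simp only [add_apply, comp_apply, zero_apply] at h
  exact eq_neg_of_add_eq_zero_left h

theorem HasDerivAt.deriv_apply_add_of_invariant {B : 𝕜 → E →L[𝕜] E →L[𝕜] G}
    {B' : E →L[𝕜] E →L[𝕜] G} {J : 𝕜 → E →L[𝕜] E} {K : E →L[𝕜] E}
    (hB : HasDerivAt B B' t) (hJ : HasDerivAt J K t)
    (hinv : ∀ s a b, B s (J s a) (J s b) = B s a b) (a b : E) :
    B' (J t a) (J t b) + B t (K a) (J t b) + B t (J t a) (K b) = B' a b := by
  have hL := hB.clm_apply₂_s3 (hJ.clm_apply_const a) (hJ.clm_apply_const b)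
  have hR := hB.clm_apply₂_s3 (hasDerivAt_const t a) (hasDerivAt_const t b)
  simp only [hinv, map_zero, zero_apply, add_zero] at hL hR
  exact hL.unique hR

end Calculus

section Invariance

variable {𝕜 E G : Type*} [NontriviallyNormedField 𝕜]
  [NormedAddCommGroup E] [NormedSpace 𝕜 E] [NormedAddCommGroup G] [NormedSpace 𝕜 G]
  {J : E →L[𝕜] E} {B : E →L[𝕜] E →L[𝕜] G}

theorem apply_right_eq_neg_of_invariant (hJ : ∀ w, J (J w) = -w)
    (hB : ∀ u v, B (J u) (J v) = B u v) (u v : E) : B u (J v) = -B (J u) v := by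
  rw [← hB u (J v), hJ, map_neg]

theorem apply_right_eq_of_antiInvariant (hJ : ∀ w, J (J w) = -w)
    (hB : ∀ u v, B (J u) (J v) = -B u v) (u v : E) : B u (J v) = B (J u) v := by
  rw [← neg_neg (B u (J v)), ← hB u (J v), hJ, map_neg, neg_neg]

end Invariance

theorem two_mul_antiInvariant_apply_eq {V : Type*} [NormedAddCommGroup V] [NormedSpace ℝ V]
    {J K : V →L[ℝ] V} {g H F : V →L[ℝ] V →L[ℝ] ℝ}
    (hJ : ∀ w, J (J w) = -w) (hKJ : ∀ w, K (J w) = -J (K w))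
    (hg : ∀ a b, g (J a) (J b) = g a b)
    (hH : ∀ a b, H (J a) (J b) = H a b) (hF : ∀ a b, F (J a) (J b) = -F a b)
    (hvar : ∀ a b, (H + F) (J a) (J b) + g (K a) (J b) + g (J a) (K b) = (H + F) a b)
    (u v : V) : 2 * F (J u) v = -(g (K u) v + g u (K v)) := by
  have h := hvar u (-J v)
  simp only [map_neg, hJ, hKJ, neg_neg, hg, add_apply,
    apply_right_eq_neg_of_invariant hJ hH, apply_right_eq_of_antiInvariant hJ hF] at h
  linarith

theorem statement3_general {V : Type*} [NormedAddCommGroup V] [NormedSpace ℝ V]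
    (J : ℝ → V →L[ℝ] V) (hJdiff : Differentiable ℝ J)
    (hJsq : ∀ t : ℝ, (J t).comp (J t) = -(ContinuousLinearMap.id ℝ V))
    (g H F : ℝ → V →L[ℝ] V →L[ℝ] ℝ)
    (hgdiff : Differentiable ℝ g)
    (hHinv : ∀ (t : ℝ) (u v : V), H t (J t u) (J t v) = H t u v)
    (hFanti : ∀ (t : ℝ) (u v : V), F t (J t u) (J t v) = -(F t u v))
    (hderiv : ∀ t : ℝ, deriv g t = H t + F t)
    (hcompat : ∀ (t : ℝ) (u v : V), g t (J t u) (J t v) = g t u v) :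
    ∀ (t : ℝ) (u v : V),
      deriv (fun s : ℝ => g s (J s u) v) t =
        H t (J t u) v + (1/2) * (g t (deriv J t u) v - g t u (deriv J t v)) := by
  intro t u v
  have hJ := (hJdiff t).hasDerivAt
  have hg : HasDerivAt g (H t + F t) t := hderiv t ▸ (hgdiff t).hasDerivAt (f := g)
  have hJJ (w : V) : J t (J t w) = -w := by simpa using congrArg (· w) (hJsq t)
  have hF := two_mul_antiInvariant_apply_eq hJJ (hJ.anticomm_of_comp_self_const hJsq)
    (hcompat t) (hHinv t) (hFanti t) (hg.deriv_apply_add_of_invariant hJ hcompat) u v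
  rw [(hg.clm_apply₂_s3 (hJ.clm_apply_const u) (hasDerivAt_const t v)).deriv]
  simp only [add_apply, map_zero, add_zero]
  linarith

/-- Lemma 4.2, second part: the induced variation of the Kähler form
`ω t (u,v) = g t (J t u, v)` of a compatible family. -/
theorem statement3 {V : Type*} [NormedAddCommGroup V] [NormedSpace ℝ V]
    [FiniteDimensional ℝ V]
    (J : ℝ → V →L[ℝ] V) (hJdiff : Differentiable ℝ J)
    (hJsq : ∀ t : ℝ, (J t).comp (J t) = -(ContinuousLinearMap.id ℝ V))
    (g H F : ℝ → V →L[ℝ] V →L[ℝ] ℝ)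
    (hgdiff : Differentiable ℝ g)
    (hgsym : ∀ (t : ℝ) (u v : V), g t u v = g t v u)
    (hHsym : ∀ (t : ℝ) (u v : V), H t u v = H t v u)
    (hFsym : ∀ (t : ℝ) (u v : V), F t u v = F t v u)
    (hHinv : ∀ (t : ℝ) (u v : V), H t (J t u) (J t v) = H t u v)
    (hFanti : ∀ (t : ℝ) (u v : V), F t (J t u) (J t v) = -(F t u v))
    (hderiv : ∀ t : ℝ, deriv g t = H t + F t)
    (hcompat : ∀ (t : ℝ) (u v : V), g t (J t u) (J t v) = g t u v) :
    ∀ (t : ℝ) (u v : V),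
      deriv (fun s : ℝ => g s (J s u) v) t =
        H t (J t u) v + (1/2) * (g t (deriv J t u) v - g t u (deriv J t v)) :=
  statement3_general J hJdiff hJsq g H F hgdiff hHinv hFanti hderiv hcompat
end

section
/- Let E be a finite-dimensional real normed vector space. Let X, Y, Z : E → E be differentiable vector fields, let J : E → L(E,E) be a differentiable map with J_x ∘ J_x = -id for all x ∈ E, and let ω : E → (alternating bilinear forms on E) be a differentiable map with ω_x(J_x u, J_x v) = ω_x(u,v) for all x, u, v. Define ⁅X,Y⁆(x) := (fderiv Y x)(X x) - (fderiv X x)(Y x), (J Y)(x) := J_x(Y x), (L_X J)(Y)(x) := ⁅X, J Y⁆(x) - J_x(⁅X,Y⁆(x)), and (L_X ω)(Y,Z)(x) := fderiv (x ↦ ω_x(Y x, Z x)) x (X x) - ω_x(⁅X,Y⁆(x), Z x) - ω_x(Y x, ⁅X,Z⁆(x)). Then for every x ∈ E, (L_X ω)(Y,Z)(x) - (L_X ω)(J Y, J Z)(x) = ω_x( (L_X J)(Y)(x), J_x(Z x) ) + ω_x( J_x(Y x), (L_X J)(Z)(x) ). -/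
/-- Lie bracket of vector fields on a vector space. -/
noncomputable def lieBracketVF {E : Type*} [NormedAddCommGroup E] [NormedSpace ℝ E]
    (X Y : E → E) (x : E) : E :=
  fderiv ℝ Y x (X x) - fderiv ℝ X x (Y x)

/-- Lie derivative of a field of endomorphisms `J` along `X`, applied to `Y`. -/
noncomputable def lieDerivJ {E : Type*} [NormedAddCommGroup E] [NormedSpace ℝ E]
    (J : E → E →L[ℝ] E) (X Y : E → E) (x : E) : E :=
  lieBracketVF X (fun y => J y (Y y)) x - J x (lieBracketVF X Y x)

/-- Lie derivative of a field of 2-forms `ω` along `X`, evaluated on `Y, Z`. -/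
noncomputable def lieDerivOmega {E : Type*} [NormedAddCommGroup E] [NormedSpace ℝ E]
    (ω : E → E →L[ℝ] E →L[ℝ] ℝ) (X Y Z : E → E) (x : E) : ℝ :=
  fderiv ℝ (fun y => ω y (Y y) (Z y)) x (X x)
    - ω x (lieBracketVF X Y x) (Z x) - ω x (Y x) (lieBracketVF X Z x)

/-- Lemma 4.4, second identity: twice the `J`-anti-invariant part of
`L_X ω` equals `ω(L_X J ·, J ·) + ω(J ·, L_X J ·)`. -/
theorem statement5 {E : Type*} [NormedAddCommGroup E] [NormedSpace ℝ E]
    [FiniteDimensional ℝ E]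
    (X Y Z : E → E) (hX : Differentiable ℝ X) (hY : Differentiable ℝ Y)
    (hZ : Differentiable ℝ Z)
    (J : E → E →L[ℝ] E) (hJdiff : Differentiable ℝ J)
    (hJsq : ∀ x : E, (J x).comp (J x) = -(ContinuousLinearMap.id ℝ E))
    (ω : E → E →L[ℝ] E →L[ℝ] ℝ) (hωdiff : Differentiable ℝ ω)
    (hωalt : ∀ (x : E) (u v : E), ω x u v = -(ω x v u))
    (hωinv : ∀ (x : E) (u v : E), ω x (J x u) (J x v) = ω x u v) :
    ∀ x : E,
      lieDerivOmega ω X Y Z x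
        - lieDerivOmega ω X (fun y => J y (Y y)) (fun y => J y (Z y)) x =
      ω x (lieDerivJ J X Y x) (J x (Z x)) + ω x (J x (Y x)) (lieDerivJ J X Z x) := by
  intro x
  have hfun : (fun y => ω y (J y (Y y)) (J y (Z y))) = fun y => ω y (Y y) (Z y) :=
    funext fun y => hωinv y (Y y) (Z y)
  simp only [lieDerivOmega, lieDerivJ, hfun, map_sub, ContinuousLinearMap.sub_apply]
  have h1 := hωinv x (lieBracketVF X Y x) (Z x)
  have h2 := hωinv x (Y x) (lieBracketVF X Z x)
  ring_nf
  linarith [h1, h2]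
end
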